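/- Let l be the largest even positive integer whose base-3/2 representation has exactly n digits. Then the largest even integer whose base-3/2 representation has exactly n+1 digits equals 2·⌊(3/4)·l⌋ + 2. -/
import Mathlib


def digits : ℕ → List ℕ
  | 0 => []
  | n + 1 => digits (2 * ((n + 1) / 3)) ++ [(n + 1) % 3]
decreasing_by omega

def val (L : List ℕ) : ℚ := L.foldl (fun acc d => 3/2 * acc + d) 0

lemma digits_pos (m : ℕ) (h : 0 < m) :
    digits m = digits (2 * (m / 3)) ++ [m % 3] := by
  cases m with
  | zero => omega
  | succ k => rw [digits]

lemma len_pos (m : ℕ) (h : 0 < m) :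
    (digits m).length = (digits (2 * (m / 3))).length + 1 := by
  rw [digits_pos m h]; simp

lemma len_mono : ∀ m' m : ℕ, m ≤ m' → (digits m).length ≤ (digits m').length := by
  intro m'
  induction m' using Nat.strong_induction_on with
  | _ m' ih =>
    intro m hm
    rcases Nat.eq_zero_or_pos m with rfl | hmpos
    · simp [digits]
    have hm'pos : 0 < m' := lt_of_lt_of_le hmpos hm
    rw [len_pos m hmpos, len_pos m' hm'pos]
    have h1 : 2 * (m' / 3) < m' := by omega
    have h2 : 2 * (m / 3) ≤ 2 * (m' / 3) := by
      have := Nat.div_le_div_right (c := 3) hm; omega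
    exact Nat.add_le_add_right (ih _ h1 _ h2) 1

theorem largest_even_rec (n l t : ℕ) (hn : 1 ≤ n)
    (hl : IsGreatest {m : ℕ | Even m ∧ 0 < m ∧ (digits m).length = n} l)
    (ht : IsGreatest {m : ℕ | Even m ∧ 0 < m ∧ (digits m).length = n + 1} t) :
    t = 2 * (3 * l / 4) + 2 := by
  obtain ⟨⟨hlev, hlpos, hllen⟩, hlub⟩ := hl
  rw [Nat.even_iff] at hlev
  set T := 2 * (3 * l / 4) + 2 with hT
  have hTdiv : 2 * (T / 3) = l := by omega
  have hTlen : (digits T).length = n + 1 := by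
    rw [len_pos T (by omega), hTdiv, hllen]
  refine ht.unique ⟨⟨⟨3 * l / 4 + 1, by omega⟩, by omega, hTlen⟩, ?_⟩
  rintro m ⟨hmev, hmpos, hmlen⟩
  rw [Nat.even_iff] at hmev
  have hmlen' : (digits (2 * (m / 3))).length = n := by
    have := len_pos m hmpos; omega
  have hprev_pos : 0 < 2 * (m / 3) := by
    rcases Nat.eq_zero_or_pos (m / 3) with h0 | h
    · exfalso; rw [h0] at hmlen'; simp [digits] at hmlen'; omega
    · omega
  have hle : 2 * (m / 3) ≤ l := hlub ⟨⟨m / 3, by omega⟩, hprev_pos, hmlen'⟩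
  omega
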